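/- The rank of a Kronecker product of real matrices is the product of the ranks: rank(A ⊗ B) = rank(A) · rank(B). -/
import Mathlib


open Kronecker

open TensorProduct Module in
lemma finrank_range_tensorProduct_map {K : Type*} [Field K] {V W V' W' : Type*}
    [AddCommGroup V] [AddCommGroup W] [AddCommGroup V'] [AddCommGroup W']
    [Module K V] [Module K W] [Module K V'] [Module K W']
    (f : V →ₗ[K] V') (g : W →ₗ[K] W') :
    Module.finrank K (LinearMap.range (TensorProduct.map f g)) =
      Module.finrank K (LinearMap.range f) * Module.finrank K (LinearMap.range g) := by
  have h1 : TensorProduct.map f g =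
      (mapIncl (LinearMap.range f) (LinearMap.range g)).comp
        (TensorProduct.map f.rangeRestrict g.rangeRestrict) := by
    rw [mapIncl, ← TensorProduct.map_comp]
    congr 1
  have hsurj : Function.Surjective
      (TensorProduct.map f.rangeRestrict g.rangeRestrict) :=
    TensorProduct.map_surjective f.surjective_rangeRestrict g.surjective_rangeRestrict
  have hinj : Function.Injective (mapIncl (LinearMap.range f) (LinearMap.range g)) :=
    Module.Flat.tensorProduct_mapIncl_injective_of_right _ _
  rw [h1, LinearMap.range_comp, LinearMap.range_eq_top.2 hsurj, Submodule.map_top,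
    ← LinearEquiv.finrank_eq (LinearEquiv.ofInjective _ hinj)]
  simp

theorem stmt16 {m n p q : ℕ} (A : Matrix (Fin m) (Fin n) ℝ)
    (B : Matrix (Fin p) (Fin q) ℝ) :
    (A ⊗ₖ B).rank = A.rank * B.rank := by
  classical
  let bm := Pi.basisFun ℝ (Fin m)
  let bn := Pi.basisFun ℝ (Fin n)
  let bp := Pi.basisFun ℝ (Fin p)
  let bq := Pi.basisFun ℝ (Fin q)
  rw [(A ⊗ₖ B).rank_eq_finrank_range_toLin (bm.tensorProduct bp) (bn.tensorProduct bq),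
    Matrix.toLin_kronecker, A.rank_eq_finrank_range_toLin bm bn,
    B.rank_eq_finrank_range_toLin bp bq]
  exact finrank_range_tensorProduct_map _ _
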